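/- Every column of a Hajós matrix H is an irreducible element of the lattice Λ_H: it cannot be written as x + y with x, y nonzero elements of Λ_H satisfying x · y ≥ 0. -/

import Mathlib

/-- A *Hajós matrix*: lower triangular, 2's on the diagonal, entries in `{0,1}` below. -/
def IsHajosMatrix {n : ℕ} (H : Matrix (Fin n) (Fin n) ℤ) : Prop :=
  (∀ i, H i i = 2) ∧ (∀ i j, i < j → H i j = 0) ∧ (∀ i j, j < i → H i j = 0 ∨ H i j = 1)

/-- `Λ_H`: the sublattice of `ℤⁿ` generated by the columns of `H`. -/
def hajosLattice {n : ℕ} (H : Matrix (Fin n) (Fin n) ℤ) : AddSubgroup (Fin n → ℤ) :=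
  AddSubgroup.closure (Set.range fun j => fun i => H i j)

/-!
The first nonzero coordinate of a nonzero element `H a` of `Λ_H` sits at the first index `m`
with `a m ≠ 0` and equals `2 a m`, so it is even. If `x + y` is the column `c` of index `j`,
then `x i y i ≤ 0` at every `i ≠ j` (there `c i ∈ {0, 1}`) and `x j y j ≤ 1` (there `c j = 2`).
At the first nonzero coordinate of `x`, or of `y`, or at `j` if both lie there, the product is
at most `-2`, hence `x · y < 0`.
-/

open Matrix

lemma mul_nonpos_of_add_eq_zero_or_one {u v : ℤ} (h : u + v = 0 ∨ u + v = 1) : u * v ≤ 0 := by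
  rcases h with h | h <;> nlinarith [sq_nonneg u, sq_nonneg (u - 1)]

lemma mul_le_one_of_add_eq_two {u v : ℤ} (h : u + v = 2) : u * v ≤ 1 := by
  obtain rfl : v = 2 - u := by omega
  nlinarith [sq_nonneg (u - 1)]

lemma mul_le_neg_two_of_even_of_add_eq_zero_or_one {u v : ℤ} (hu : Even u) (hu0 : u ≠ 0)
    (h : u + v = 0 ∨ u + v = 1) : u * v ≤ -2 := by
  obtain ⟨k, rfl⟩ := hu
  rcases lt_or_gt_of_ne hu0 with hk | hk
  · obtain ⟨hk, hv⟩ : k ≤ -1 ∧ 2 ≤ v := by omega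
    nlinarith
  · obtain ⟨hk, hv⟩ : 1 ≤ k ∧ v ≤ -1 := by omega
    nlinarith

lemma mul_le_neg_two_of_even_of_add_eq_two {u v : ℤ} (hu : Even u) (hv : Even v) (hu0 : u ≠ 0)
    (hv0 : v ≠ 0) (h : u + v = 2) : u * v ≤ -2 := by
  obtain ⟨k, rfl⟩ := hu
  obtain ⟨l, rfl⟩ := hv
  rcases lt_or_gt_of_ne hu0 with hk | hk
  · obtain ⟨hk, hl⟩ : k ≤ -1 ∧ 2 ≤ l := by omega
    nlinarith
  · obtain ⟨hk, hl⟩ : 2 ≤ k ∧ l ≤ -1 := by omega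
    nlinarith

lemma mulVec_apply_eq_diag_mul_of_lowerTriangular {ι R : Type*} [Fintype ι] [LinearOrder ι]
    [NonUnitalNonAssocSemiring R] {H : Matrix ι ι R} (hH : ∀ i k, i < k → H i k = 0)
    {a : ι → R} {m : ι} (ha : ∀ k < m, a k = 0) : (H *ᵥ a) m = H m m * a m := by
  simp only [mulVec, dotProduct]
  refine Finset.sum_eq_single m (fun k _ hk => ?_) (by simp)
  rcases lt_or_gt_of_ne hk with h | h
  · rw [ha k h, mul_zero]
  · rw [hH m k h, zero_mul]

lemma mem_hajosLattice_iff {n : ℕ} {H : Matrix (Fin n) (Fin n) ℤ} {z : Fin n → ℤ} :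
    z ∈ hajosLattice H ↔ ∃ a, H *ᵥ a = z := by
  rw [hajosLattice, ← Submodule.span_int_eq_addSubgroupClosure, Submodule.mem_toAddSubgroup,
    Submodule.mem_span_range_iff_exists_fun]
  refine exists_congr fun a => Eq.congr_left (funext fun i => ?_)
  simp [mulVec, dotProduct, Finset.sum_apply, mul_comm]

namespace IsHajosMatrix

variable {n : ℕ} {H : Matrix (Fin n) (Fin n) ℤ}

lemma apply_eq_zero_or_one_of_ne (hH : IsHajosMatrix H) {i j : Fin n} (hij : i ≠ j) :
    H i j = 0 ∨ H i j = 1 := by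
  rcases lt_or_gt_of_ne hij with h | h
  · exact Or.inl (hH.2.1 i j h)
  · exact hH.2.2 i j h

lemma exists_even_ne_zero_of_mem (hH : IsHajosMatrix H) {z : Fin n → ℤ}
    (hz : z ∈ hajosLattice H) (hz0 : z ≠ 0) : ∃ m, Even (z m) ∧ z m ≠ 0 := by
  obtain ⟨a, rfl⟩ := mem_hajosLattice_iff.mp hz
  obtain ⟨k, hk⟩ : ∃ k, a k ≠ 0 := by
    by_contra! ha
    exact hz0 (by rw [show a = 0 from funext ha, mulVec_zero])
  obtain ⟨m, hm, hmin⟩ := wellFounded_lt.has_min {k | a k ≠ 0} ⟨k, hk⟩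
  have hbelow : ∀ k < m, a k = 0 := fun k hk => not_not.mp fun h => hmin k h hk
  have hzm : (H *ᵥ a) m = 2 * a m := by
    rw [mulVec_apply_eq_diag_mul_of_lowerTriangular hH.2.1 hbelow, hH.1 m]
  exact ⟨m, hzm ▸ even_two_mul _, hzm ▸ mul_ne_zero two_ne_zero hm⟩

lemma mul_le_ite_of_add_eq_col (hH : IsHajosMatrix H) {x y : Fin n → ℤ} {i j : Fin n}
    (h : x i + y i = H i j) : x i * y i ≤ if i = j then 1 else 0 := by
  split_ifs with hij
  · subst hij
    exact mul_le_one_of_add_eq_two (h.trans (hH.1 i))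
  · exact mul_nonpos_of_add_eq_zero_or_one (h ▸ hH.apply_eq_zero_or_one_of_ne hij)

lemma exists_mul_le_neg_two_of_add_eq_col (hH : IsHajosMatrix H) {x y : Fin n → ℤ}
    (hx : x ∈ hajosLattice H) (hy : y ∈ hajosLattice H) (hx0 : x ≠ 0) (hy0 : y ≠ 0) {j : Fin n}
    (hxy : ∀ i, x i + y i = H i j) : ∃ i, x i * y i ≤ -2 := by
  obtain ⟨m, hxm, hxm0⟩ := hH.exists_even_ne_zero_of_mem hx hx0
  obtain ⟨m', hym', hym0⟩ := hH.exists_even_ne_zero_of_mem hy hy0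
  by_cases hmj : m = j
  · by_cases hm'j : m' = j
    · rw [hmj] at hxm hxm0
      rw [hm'j] at hym' hym0
      exact ⟨j, mul_le_neg_two_of_even_of_add_eq_two hxm hym' hxm0 hym0 ((hxy j).trans (hH.1 j))⟩
    · refine ⟨m', ?_⟩
      rw [mul_comm]
      refine mul_le_neg_two_of_even_of_add_eq_zero_or_one hym' hym0 ?_
      rw [add_comm, hxy m']
      exact hH.apply_eq_zero_or_one_of_ne hm'j
  · exact ⟨m, mul_le_neg_two_of_even_of_add_eq_zero_or_one hxm hxm0
      ((hxy m).symm ▸ hH.apply_eq_zero_or_one_of_ne hmj)⟩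

end IsHajosMatrix

/-- Every column of a Hajós matrix `H` is an irreducible element of `Λ_H`: it cannot be
written as `x + y` with `x, y` nonzero elements of `Λ_H` and `x · y ≥ 0`. -/
theorem hajos_column_irreducible {n : ℕ} (H : Matrix (Fin n) (Fin n) ℤ)
    (hH : IsHajosMatrix H) (j : Fin n) :
    ¬ ∃ x y : Fin n → ℤ, x ∈ hajosLattice H ∧ y ∈ hajosLattice H ∧ x ≠ 0 ∧ y ≠ 0 ∧
        x + y = (fun i => H i j) ∧ 0 ≤ ∑ i, x i * y i := by
  rintro ⟨x, y, hx, hy, hx0, hy0, hxy, hdot⟩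
  have hcol : ∀ i, x i + y i = H i j := congrFun hxy
  obtain ⟨i₀, hi₀⟩ := hH.exists_mul_le_neg_two_of_add_eq_col hx hy hx0 hy0 hcol
  have hle : ∀ i, x i * y i ≤ (if i = j then 1 else 0) - (if i = i₀ then 2 else 0) := by
    intro i
    have hi := hH.mul_le_ite_of_add_eq_col (hcol i)
    by_cases hii₀ : i = i₀
    · subst hii₀
      split_ifs at hi ⊢ <;> linarith
    · simpa [hii₀] using hi
  have hsum := Finset.sum_le_sum fun i (_ : i ∈ Finset.univ) => hle i
  simp only [Finset.sum_sub_distrib, Finset.sum_ite_eq', Finset.mem_univ, if_true] at hsum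
  omega
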